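/- Let N ≥ 1 and c ≠ q^{-n} for 1 ≤ n ≤ N. Then ∑_{n=1}^{N} [N choose n] (-1)^{n-1} q^{n(n+1)/2}/(1-c q^n) = (1/(1-c)) (1 − (q;q)_N/(cq;q)_N). -/
import Mathlib


open Finset

/-- q-Pochhammer symbol (a;q)_n = ∏_{k=0}^{n-1} (1 - a q^k). -/
noncomputable def qP (a q : ℂ) (n : ℕ) : ℂ := ∏ k ∈ Finset.range n, (1 - a * q ^ k)

/-- Gaussian (q-)binomial coefficient [N choose n]_q. -/
noncomputable def qBinom (q : ℂ) (N n : ℕ) : ℂ := qP q q N / (qP q q n * qP q q (N - n))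

lemma qP_zero (a q : ℂ) : qP a q 0 = 1 := by simp [qP]

lemma qP_succ (a q : ℂ) (n : ℕ) : qP a q (n+1) = qP a q n * (1 - a * q ^ n) :=
  Finset.prod_range_succ _ _

lemma qP_succ' (a q : ℂ) (n : ℕ) : qP a q (n+1) = (1 - a) * qP (a*q) q n := by
  rw [qP, Finset.prod_range_succ', qP]
  rw [mul_comm]
  congr 1
  · simp
  · apply Finset.prod_congr rfl
    intro k _
    ring

lemma one_sub_q_pow_ne_zero {q : ℂ} (hq : ‖q‖ < 1) (k : ℕ) : (1 : ℂ) - q * q ^ k ≠ 0 := by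
  intro h
  have h1 : (1:ℂ) = q ^ (k+1) := by rw [pow_succ']; exact sub_eq_zero.mp h
  have h2 : (1:ℝ) = ‖q‖ ^ (k+1) := by
    calc (1:ℝ) = ‖(1:ℂ)‖ := by simp
    _ = ‖q ^ (k+1)‖ := by rw [← h1]
    _ = ‖q‖ ^ (k+1) := norm_pow _ _
  have h3 : ‖q‖ ^ (k+1) < 1 := pow_lt_one₀ (norm_nonneg q) hq (Nat.succ_ne_zero k)
  linarith

lemma qP_q_ne_zero {q : ℂ} (hq : ‖q‖ < 1) (n : ℕ) : qP q q n ≠ 0 := by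
  rw [qP]
  exact Finset.prod_ne_zero_iff.2 fun k _ => one_sub_q_pow_ne_zero hq k

lemma qP_ne_zero' {a q : ℂ} {N : ℕ} (h : ∀ k < N, a * q ^ k ≠ 1) : qP a q N ≠ 0 := by
  rw [qP]
  exact Finset.prod_ne_zero_iff.2 fun k hk hh =>
    h k (Finset.mem_range.mp hk) (sub_eq_zero.mp hh).symm

lemma qBinom_zero {q : ℂ} (hq : ‖q‖ < 1) (N : ℕ) : qBinom q N 0 = 1 := by
  rw [qBinom, qP_zero, Nat.sub_zero, one_mul, div_self (qP_q_ne_zero hq N)]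

lemma qBinom_self {q : ℂ} (hq : ‖q‖ < 1) (N : ℕ) : qBinom q N N = 1 := by
  rw [qBinom, Nat.sub_self, qP_zero, mul_one, div_self (qP_q_ne_zero hq N)]

lemma qBinom_pascal {q : ℂ} (hq : ‖q‖ < 1) {N n : ℕ} (h1 : 1 ≤ n) (h2 : n ≤ N) :
    qBinom q (N+1) n = qBinom q N n + q ^ (N+1-n) * qBinom q N (n-1) := by
  obtain ⟨m, rfl⟩ : ∃ m, n = m + 1 := ⟨n-1, by omega⟩
  obtain ⟨d, rfl⟩ : ∃ d, N = m + 1 + d := ⟨N - (m+1), by omega⟩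
  have e1 : m + 1 + d + 1 - (m+1) = d + 1 := by omega
  have e2 : m + 1 + d - (m+1) = d := by omega
  have e4 : m + 1 - 1 = m := by omega
  have e3 : m + 1 + d - m = d + 1 := by omega
  simp only [qBinom, e4]
  simp only [e1, e2, e3]
  have e5 : m + 1 + d + 1 = (m + 1 + d) + 1 := by omega
  rw [e5, qP_succ q q (m+1+d), qP_succ q q m, qP_succ q q d]
  have hm := qP_q_ne_zero hq m
  have hd := qP_q_ne_zero hq d
  have hmd := qP_q_ne_zero hq (m+1+d)
  have fm := one_sub_q_pow_ne_zero hq m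
  have fd := one_sub_q_pow_ne_zero hq d
  field_simp
  ring

lemma key {q : ℂ} (hq : ‖q‖ < 1) :
    ∀ (N : ℕ) (c : ℂ), (∀ n ≤ N, c * q ^ n ≠ 1) →
    ∑ n ∈ Finset.range (N+1), qBinom q N n * ((-1)^n * q^(n*(n+1)/2) / (1 - c * q^n)) =
      qP q q N / qP c q (N+1) := by
  intro N
  induction N with
  | zero =>
    intro c hc
    simp [qBinom, qP]
  | succ N ih =>
    intro c hc
    have hc' : ∀ n ≤ N, (c*q) * q ^ n ≠ 1 := by
      intro n hn h
      exact hc (n+1) (by omega) (by rw [pow_succ', ← mul_assoc]; exact h)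
    have hstep :
        ∑ n ∈ Finset.range (N+2), qBinom q (N+1) n *
            ((-1)^n * q^(n*(n+1)/2) / (1 - c * q^n)) =
          ∑ n ∈ Finset.range (N+2),
            ((if n ≤ N then qBinom q N n * ((-1)^n * q^(n*(n+1)/2) / (1 - c * q^n)) else 0)
            + (if 1 ≤ n then q^(N+1-n) * qBinom q N (n-1) *
                ((-1)^n * q^(n*(n+1)/2) / (1 - c * q^n)) else 0)) := by
      apply Finset.sum_congr rfl
      intro n hn
      have hn' : n < N + 2 := Finset.mem_range.mp hn
      rcases Nat.eq_zero_or_pos n with h0 | h1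
      · subst h0
        simp [qBinom_zero hq]
      · rcases Nat.lt_or_ge n (N+1) with hlt | hge
        · have hle : n ≤ N := by omega
          rw [qBinom_pascal hq (show 1 ≤ n by omega) hle, if_pos hle,
            if_pos (show 1 ≤ n by omega)]
          ring
        · have hn1 : n = N + 1 := by omega
          subst hn1
          rw [if_neg (by omega), if_pos (by omega), Nat.add_sub_cancel,
            qBinom_self hq, qBinom_self hq]
          simp
    rw [hstep, Finset.sum_add_distrib]
    have hsum1 :
        ∑ n ∈ Finset.range (N+2),
            (if n ≤ N then qBinom q N n * ((-1)^n * q^(n*(n+1)/2) / (1 - c * q^n)) else 0) =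
          qP q q N / qP c q (N+1) := by
      rw [Finset.sum_range_succ, if_neg (by omega), add_zero]
      rw [show (∑ n ∈ Finset.range (N+1),
            (if n ≤ N then qBinom q N n * ((-1)^n * q^(n*(n+1)/2) / (1 - c * q^n)) else 0)) =
          ∑ n ∈ Finset.range (N+1),
            qBinom q N n * ((-1)^n * q^(n*(n+1)/2) / (1 - c * q^n)) from
        Finset.sum_congr rfl fun n hn => if_pos (by
          have := Finset.mem_range.mp hn; omega)]
      exact ih c fun n hn => hc n (by omega)
    have hsum2 :
        ∑ n ∈ Finset.range (N+2),
            (if 1 ≤ n then q^(N+1-n) * qBinom q N (n-1) *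
                ((-1)^n * q^(n*(n+1)/2) / (1 - c * q^n)) else 0) =
          -q^(N+1) * (qP q q N / qP (c*q) q (N+1)) := by
      rw [Finset.sum_range_succ']
      rw [if_neg (by omega), add_zero]
      have hterm : ∀ i ∈ Finset.range (N+1),
          (if 1 ≤ i + 1 then q^(N+1-(i+1)) * qBinom q N (i+1-1) *
              ((-1)^(i+1) * q^((i+1)*((i+1)+1)/2) / (1 - c * q^(i+1))) else 0) =
            -q^(N+1) * (qBinom q N i * ((-1)^i * q^(i*(i+1)/2) / (1 - (c*q) * q^i))) := by
        intro i hi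
        have hi' : i ≤ N := by have := Finset.mem_range.mp hi; omega
        rw [if_pos (by omega)]
        have e1 : N + 1 - (i+1) = N - i := by omega
        have e2 : i + 1 - 1 = i := rfl
        have e3 : (i+1)*((i+1)+1)/2 = (N + 1 + i*(i+1)/2) - (N - i) := by
          obtain ⟨t, ht⟩ := Nat.even_mul_succ_self i
          have hexp : (i+1)*((i+1)+1) = i*(i+1) + 2*(i+1) := by ring
          omega
        have e4 : N - i ≤ N + 1 + i*(i+1)/2 := by omega
        rw [e1, e2, e3]
        have e5 : q^(N-i) * q^((N + 1 + i*(i+1)/2) - (N-i)) = q^(N+1+i*(i+1)/2) := by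
          rw [← pow_add, Nat.add_sub_cancel' (by omega : N - i ≤ N + 1 + i*(i+1)/2)]
        have e6 : (1 : ℂ) - c * q^(i+1) = 1 - (c*q) * q^i := by
          rw [pow_succ']; ring
        rw [e6]
        rw [pow_succ (-1 : ℂ) i]
        have : q^(N+1+i*(i+1)/2) = q^(N+1) * q^(i*(i+1)/2) := pow_add q _ _
        calc q^(N-i) * qBinom q N i *
              ((-1)^i * (-1) * q^((N + 1 + i*(i+1)/2) - (N-i)) / (1 - (c*q) * q^i))
            = -(q^(N-i) * q^((N + 1 + i*(i+1)/2) - (N-i))) * (qBinom q N i *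
              ((-1)^i / (1 - (c*q) * q^i))) := by ring
          _ = -(q^(N+1) * q^(i*(i+1)/2)) * (qBinom q N i *
              ((-1)^i / (1 - (c*q) * q^i))) := by rw [e5, this]
          _ = -q^(N+1) * (qBinom q N i * ((-1)^i * q^(i*(i+1)/2) / (1 - (c*q) * q^i))) := by
              ring
      rw [Finset.sum_congr rfl hterm, ← Finset.mul_sum, ih (c*q) hc']
    rw [hsum1, hsum2]
    have hP : qP (c*q) q N ≠ 0 := qP_ne_zero' fun k hk => hc' k (by omega)
    have hfc : (1 : ℂ) - c ≠ 0 := by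
      have := hc 0 (by omega)
      simpa [sub_ne_zero] using fun h => this (by rw [pow_zero, mul_one]; exact h.symm)
    have hfN : (1 : ℂ) - (c*q) * q^N ≠ 0 := by
      have := hc' N le_rfl
      exact sub_ne_zero.mpr fun h => this h.symm
    rw [qP_succ' c q (N+1), qP_succ' c q N, qP_succ (c*q) q N, qP_succ q q N]
    field_simp
    ring

theorem stmt_3 (N : ℕ) (hN : 1 ≤ N) (q c : ℂ) (hq : ‖q‖ < 1) (hc1 : c ≠ 1)
    (hc : ∀ n, 1 ≤ n → n ≤ N → c * q ^ n ≠ 1) :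
    ∑ n ∈ Finset.Icc 1 N,
        qBinom q N n * ((-1) ^ (n - 1) * q ^ (n * (n + 1) / 2) / (1 - c * q ^ n)) =
      (1 / (1 - c)) * (1 - qP q q N / qP (c * q) q N) := by
  have hc0 : ∀ n ≤ N, c * q ^ n ≠ 1 := by
    intro n hn
    rcases Nat.eq_zero_or_pos n with h0 | h1
    · subst h0; simpa using hc1
    · exact hc n h1 hn
  have hT := key hq N c hc0
  have hsplit : Finset.range (N+1) = insert 0 (Finset.Icc 1 N) := by
    ext x
    simp only [Finset.mem_range, Finset.mem_insert, Finset.mem_Icc]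
    omega
  rw [hsplit, Finset.sum_insert (by simp)] at hT
  have hf0 : qBinom q N 0 * ((-1:ℂ)^0 * q^(0*(0+1)/2) / (1 - c * q^0)) = 1 / (1 - c) := by
    rw [qBinom_zero hq]
    simp
  rw [hf0] at hT
  have hneg : ∑ n ∈ Finset.Icc 1 N,
      qBinom q N n * ((-1:ℂ)^(n-1) * q^(n*(n+1)/2) / (1 - c * q^n)) =
      -∑ n ∈ Finset.Icc 1 N,
      qBinom q N n * ((-1:ℂ)^n * q^(n*(n+1)/2) / (1 - c * q^n)) := by
    rw [← Finset.sum_neg_distrib]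
    apply Finset.sum_congr rfl
    intro n hn
    have h1 : 1 ≤ n := (Finset.mem_Icc.mp hn).1
    obtain ⟨m, rfl⟩ : ∃ m, n = m + 1 := ⟨n-1, by omega⟩
    have : m + 1 - 1 = m := rfl
    rw [this, pow_succ (-1:ℂ) m]
    ring
  rw [hneg]
  have hsum : ∑ n ∈ Finset.Icc 1 N,
      qBinom q N n * ((-1:ℂ)^n * q^(n*(n+1)/2) / (1 - c * q^n)) =
      qP q q N / qP c q (N+1) - 1/(1-c) := by
    linear_combination hT
  rw [hsum, qP_succ' c q N]
  have hP : qP (c*q) q N ≠ 0 := qP_ne_zero' fun k hk h =>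
    hc (k+1) (by omega) (by omega) (by rw [pow_succ', ← mul_assoc]; exact h)
  have hfc : (1:ℂ) - c ≠ 0 := sub_ne_zero.mpr fun h => hc1 h.symm
  field_simp
  ring
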